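/- (Semi-characterization of the difference hierarchy) For every ordinal α > 0 and S ⊆ ℕ^ℕ: S is guessable with fewer than α+1 mind changes if and only if S ∈ D_α(Σ⁰₁) or S^c ∈ D_α(Σ⁰₁). -/

import Mathlib

open Filter Topology Classical

/-- The initial segment `f↾n` of an infinite sequence. -/
def res (f : ℕ → ℕ) (n : ℕ) : List ℕ := List.ofFn (fun i : Fin n => f i)

/-- `[X]`: the set of infinite sequences all of whose finite initial segments lie in `X`. -/
def seqsIn (X : Set (List ℕ)) : Set (ℕ → ℕ) := {f | ∀ n, res f n ∈ X}

/-- The simplified remainder `S_α`. -/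
noncomputable def SRem (S : Set (ℕ → ℕ)) (α : Ordinal.{0}) : Set (List ℕ) :=
  Ordinal.limitRecOn α Set.univ
    (fun _ prev => {x | x ∈ prev ∧ ∃ f g : ℕ → ℕ,
      f ∈ seqsIn prev ∧ g ∈ seqsIn prev ∧ res f x.length = x ∧ res g x.length = x ∧
      f ∈ S ∧ g ∉ S})
    (fun _ _ ih => ⋂ (β : Ordinal.{0}) (h : β < _), ih β h)

/-- Wadge's remainder `Rm_μ(A,B)`. -/
noncomputable def Rm (A B : Set (ℕ → ℕ)) (μ : Ordinal.{0}) : Set (ℕ → ℕ) :=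
  if μ = 0 then Set.univ
  else ⋂ (ν : {ν : Ordinal.{0} // ν < μ}),
    closure (Rm A B ν.1 ∩ A) ∩ closure (Rm A B ν.1 ∩ B)
termination_by μ
decreasing_by exact ν.2

/-- The least ordinal at which the simplified remainders stabilize. -/
noncomputable def alphaS (S : Set (ℕ → ℕ)) : Ordinal.{0} :=
  sInf {α | SRem S α = SRem S (α + 1)}

/-- `S_∞`, the stable value of the simplified remainders. -/
noncomputable def Sinf (S : Set (ℕ → ℕ)) : Set (List ℕ) := SRem S (alphaS S)

/-- `β(σ)`: the least ordinal `γ` with `σ ∉ S_γ`. -/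
noncomputable def betaOf (S : Set (ℕ → ℕ)) (σ : List ℕ) : Ordinal.{0} :=
  sInf {γ | σ ∉ SRem S γ}

/-- `G` guesses `S`. -/
def Guesses (G : List ℕ → Bool) (S : Set (ℕ → ℕ)) : Prop :=
  ∀ f : ℕ → ℕ, ∀ᶠ n in atTop, (G (res f n) = true ↔ f ∈ S)

def Guessable (S : Set (ℕ → ℕ)) : Prop := ∃ G, Guesses G S

/-- `G, H` witness that `S` is guessable with `< α` mind changes. -/
def WitnessMC (S : Set (ℕ → ℕ)) (α : Ordinal.{0}) (G : List ℕ → Bool)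
    (H : List ℕ → Ordinal.{0}) : Prop :=
  Guesses G S ∧ (∀ σ, H σ < α) ∧
  (∀ (f : ℕ → ℕ) (n : ℕ), H (res f (n + 1)) ≤ H (res f n)) ∧
  (∀ (f : ℕ → ℕ) (n : ℕ), G (res f (n + 1)) ≠ G (res f n) →
    H (res f (n + 1)) < H (res f n))

def GuessableMC (S : Set (ℕ → ℕ)) (α : Ordinal.{0}) : Prop := ∃ G H, WitnessMC S α G H

/-- An ordinal is even if it is of the form `λ + n` with `λ` limit or zero and `n` even. -/
def OrdEven (o : Ordinal.{0}) : Prop :=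
  ∃ (l : Ordinal.{0}) (n : ℕ), (l = 0 ∨ Order.IsSuccLimit l) ∧ o = l + n ∧ Even n

/-- The Hausdorff difference set `D_α((A_η)_{η<α})`. -/
def DSet (α : Ordinal.{0}) (A : Ordinal.{0} → Set (ℕ → ℕ)) : Set (ℕ → ℕ) :=
  {x | ∃ η, η < α ∧ x ∈ A η ∧ (∀ η', η' < η → x ∉ A η') ∧ (OrdEven η ↔ ¬ OrdEven α)}

/-- Membership in the class `D_α(Σ⁰₁)`. -/
def InDiff (α : Ordinal.{0}) (S : Set (ℕ → ℕ)) : Prop :=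
  ∃ A : Ordinal.{0} → Set (ℕ → ℕ), (∀ η, η < α → IsOpen (A η)) ∧
    (∀ η η', η ≤ η' → η' < α → A η ⊆ A η') ∧ S = DSet α A
/-- Wadge's `Rm_Ω(S)`: the stable value of `Rm_μ(S, Sᶜ)`. -/
noncomputable def RmInf (S : Set (ℕ → ℕ)) : Set (ℕ → ℕ) :=
  Rm S Sᶜ (sInf {μ : Ordinal.{0} | Rm S Sᶜ μ = Rm S Sᶜ (μ + 1)})

/-- The canonical guesser `G_S`. -/
noncomputable def GS (S : Set (ℕ → ℕ)) (σ : List ℕ) : Bool :=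
  if (∃ f : ℕ → ℕ, res f σ.length = σ ∧ f ∈ seqsIn (SRem S (betaOf S σ - 1))) then
    decide (∃ f : ℕ → ℕ, res f σ.length = σ ∧ f ∈ seqsIn (SRem S (betaOf S σ - 1)) ∧ f ∈ S)
  else if h : σ = [] then false
  else GS S σ.dropLast
termination_by σ.length
decreasing_by
  simp only [List.length_dropLast]
  exact Nat.sub_lt (List.length_pos_iff.mpr h) one_pos

/-- `S` is `F_σ`: a countable union of closed sets. -/
def IsFsigma (S : Set (ℕ → ℕ)) : Prop :=
  ∃ C : ℕ → Set (ℕ → ℕ), (∀ n, IsClosed (C n)) ∧ S = ⋃ n, C n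

/-- Boolean combinations of open sets. -/
inductive BoolComb : Set (ℕ → ℕ) → Prop
  | isOpen {s : Set (ℕ → ℕ)} : IsOpen s → BoolComb s
  | compl {s : Set (ℕ → ℕ)} : BoolComb s → BoolComb sᶜ
  | union {s t : Set (ℕ → ℕ)} : BoolComb s → BoolComb t → BoolComb (s ∪ t)

/-- The Borel class `Σ⁰_α` on Baire space (for `α ≥ 1`). -/
noncomputable def Sigma0 (α : Ordinal.{0}) : Set (Set (ℕ → ℕ)) :=
  if α = 1 then {s | IsOpen s}
  else {s | ∃ g : ℕ → Set (ℕ → ℕ), s = ⋃ n, g n ∧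
    ∀ n, ∃ β : {β : Ordinal.{0} // β < α}, 1 ≤ β.1 ∧ (g n)ᶜ ∈ Sigma0 β.1}
termination_by α
decreasing_by exact β.2

/-- The ambiguous Borel class `Δ⁰_α`. -/
noncomputable def Delta0 (α : Ordinal.{0}) : Set (Set (ℕ → ℕ)) :=
  {s | s ∈ Sigma0 α ∧ sᶜ ∈ Sigma0 α}

/-- The Boolean characteristic function. -/
noncomputable def chi (X : Set (ℕ → ℕ)) (f : ℕ → ℕ) : Bool := decide (f ∈ X)

/-- `G` guesses `S` based on the sequence of sets `Ss`. -/
def GuessesBased (G : List Bool → Bool) (Ss : ℕ → Set (ℕ → ℕ)) (S : Set (ℕ → ℕ)) : Prop :=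
  ∀ f : ℕ → ℕ, ∀ᶠ n in atTop,
    (G (List.ofFn (fun i : Fin n => chi (Ss i) f)) = true ↔ f ∈ S)

/-- `S` is `μ`th-order guessable. -/
def HigherGuessable (μ : Ordinal.{0}) (S : Set (ℕ → ℕ)) : Prop :=
  ∃ Ss : ℕ → Set (ℕ → ℕ), (∀ i, ∃ μi, μi < μ ∧ Ss i ∈ Delta0 (μi + 1)) ∧
    ∃ G : List Bool → Bool, GuessesBased G Ss S

/-!
A set `D_α((A_η)_η)` is guessed by reading off, at a finite stage `σ`, the least `η` with
`[σ] ⊆ A_η` (or `α` if there is none) and guessing according to the parity of `η`: this index can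
only decrease along a sequence, the guess changes only when it does, and by openness it settles on
the least `η` with `f ∈ A_η`.

Conversely, let `G` guess `S` with a counter `H ≤ α`; after complementing, `G [] = false`. Raise
`H σ` by one wherever `G σ` disagrees with the parity guess at `H σ`. Because `H` is constant
at `α` only before the first mind change, the adjusted counter stays `≤ α`, and it is still
non-increasing along every sequence. The sets `A_η` of sequences along which it drops to `≤ η`
are open and increasing, and `S = D_α((A_η)_η)` because the guess is now the parity of the
limit of the counter.
-/

open Ordinal

lemma ordEven_iff_of_mod_omega0_eq {o : Ordinal.{0}} {n : ℕ} (h : o % ω = n) :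
    OrdEven o ↔ Even n := by
  constructor
  · rintro ⟨l, m, hl, rfl, hm⟩
    have hdvd : ω ∣ l := isSuccPrelimit_iff_omega0_dvd.1 <| by
      rcases hl with rfl | hl
      exacts [Order.isSuccPrelimit_bot, hl.isSuccPrelimit]
    obtain ⟨k, rfl⟩ := hdvd
    rw [mul_add_mod_self, natCast_mod_omega0, Nat.cast_inj] at h
    exact h ▸ hm
  · intro hn
    refine ⟨ω * (o / ω), n, ?_, by rw [← h, div_add_mod], hn⟩
    rcases eq_or_ne (ω * (o / ω)) 0 with h0 | h0
    · exact .inl h0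
    · exact .inr <|
        Ordinal.isSuccLimit_iff.2 ⟨h0, isSuccPrelimit_iff_omega0_dvd.2 (dvd_mul_right _ _)⟩

lemma ordEven_add_one (o : Ordinal.{0}) : OrdEven (o + 1) ↔ ¬ OrdEven o := by
  obtain ⟨n, hn⟩ := lt_omega0.1 (mod_lt o omega0_ne_zero)
  have hn' : (o + 1) % ω = ((n + 1 : ℕ) : Ordinal) := by
    conv_lhs => rw [← div_add_mod o ω, hn, add_assoc]
    rw [mul_add_mod_self, ← Nat.cast_add_one, natCast_mod_omega0]
  rw [ordEven_iff_of_mod_omega0_eq hn, ordEven_iff_of_mod_omega0_eq hn', Nat.even_add_one]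

lemma res_length (f : ℕ → ℕ) (n : ℕ) : (res f n).length = n := List.length_ofFn

lemma res_eq_res_iff {f g : ℕ → ℕ} {n : ℕ} : res f n = res g n ↔ ∀ i < n, f i = g i := by
  simp only [res, List.ofFn_inj, funext_iff, Fin.forall_iff]

lemma exists_res_eq (σ : List ℕ) : ∃ f, res f σ.length = σ :=
  ⟨fun i => σ.getD i 0, List.ext_getElem (res_length _ _) fun i _ h => by simp [res]⟩

def extensions (σ : List ℕ) : Set (ℕ → ℕ) := {g | res g σ.length = σ}

lemma extensions_res (f : ℕ → ℕ) (n : ℕ) : extensions (res f n) = PiNat.cylinder f n := by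
  ext g
  simp only [extensions, res_length, Set.mem_ofPred_eq, res_eq_res_iff, PiNat.mem_cylinder_iff]

lemma mem_extensions_res (f : ℕ → ℕ) (n : ℕ) : f ∈ extensions (res f n) := by
  simp [extensions_res]

lemma extensions_res_succ_subset (f : ℕ → ℕ) (n : ℕ) :
    extensions (res f (n + 1)) ⊆ extensions (res f n) := by
  simpa only [extensions_res] using PiNat.cylinder_anti f n.le_succ

lemma IsOpen.eventually_extensions_res_subset {A : Set (ℕ → ℕ)} (hA : IsOpen A) {f : ℕ → ℕ}
    (hf : f ∈ A) : ∀ᶠ n in atTop, extensions (res f n) ⊆ A := by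
  obtain ⟨v, ⟨y, N, rfl⟩, hfv, hvA⟩ :=
    (PiNat.isTopologicalBasis_cylinders fun _ : ℕ => ℕ).exists_subset_of_mem_open hf hA
  rw [← PiNat.mem_cylinder_iff_eq.1 hfv] at hvA
  filter_upwards [eventually_ge_atTop N] with n hn
  simpa only [extensions_res] using (PiNat.cylinder_anti f hn).trans hvA

lemma isOpen_setOf_res_mem (Q : Set (List ℕ)) (n : ℕ) : IsOpen {f : ℕ → ℕ | res f n ∈ Q} := by
  refine isOpen_iff_mem_nhds.2 fun f hf => Filter.mem_of_superset
    ((PiNat.isOpen_cylinder _ f n).mem_nhds (PiNat.self_mem_cylinder f n)) fun g hg => ?_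
  rw [← extensions_res, extensions, res_length] at hg
  rwa [Set.mem_ofPred_eq, hg]

/-- The value `χ_{D_α}` takes on points whose least index in an increasing family is `η`. -/
noncomputable def diffGuess (α η : Ordinal.{0}) : Bool := decide (OrdEven η ↔ ¬ OrdEven α)

lemma diffGuess_self (α : Ordinal.{0}) : diffGuess α α = false := by
  simp [diffGuess]

lemma diffGuess_add_one (α η : Ordinal.{0}) : diffGuess α (η + 1) = !diffGuess α η := by
  by_cases h : OrdEven η <;> by_cases h' : OrdEven α <;> simp [diffGuess, ordEven_add_one, h, h']

lemma mem_dSet_iff_diffGuess {α r : Ordinal.{0}} {A : Ordinal.{0} → Set (ℕ → ℕ)} {f : ℕ → ℕ}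
    (hA : ∀ η, f ∈ A η ↔ r ≤ η) (hr : r ≤ α) : f ∈ DSet α A ↔ diffGuess α r = true := by
  rw [diffGuess, decide_eq_true_iff]
  constructor
  · rintro ⟨η, -, hη, hmin, hpar⟩
    obtain rfl : η = r := le_antisymm (not_lt.1 fun h => hmin r h ((hA r).2 le_rfl)) ((hA η).1 hη)
    exact hpar
  · intro hpar
    have hlt : r < α := hr.lt_of_ne fun h => iff_not_self (h ▸ hpar)
    exact ⟨r, hlt, (hA r).2 le_rfl, fun η hη h => (hA η).1 h |>.not_gt hη, hpar⟩

lemma dSet_congr {α : Ordinal.{0}} {A B : Ordinal.{0} → Set (ℕ → ℕ)} (h : ∀ η < α, A η = B η) :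
    DSet α A = DSet α B := by
  ext f
  refine exists_congr fun η => ⟨?_, ?_⟩ <;> rintro ⟨hη, hf, hmin, hpar⟩
  · exact ⟨hη, h η hη ▸ hf, fun η' hη' => h η' (hη'.trans hη) ▸ hmin η' hη', hpar⟩
  · exact ⟨hη, h η hη ▸ hf, fun η' hη' => h η' (hη'.trans hη) ▸ hmin η' hη', hpar⟩

lemma WitnessMC.compl {S : Set (ℕ → ℕ)} {α : Ordinal.{0}} {G : List ℕ → Bool}
    {H : List ℕ → Ordinal.{0}} (h : WitnessMC S α G H) : WitnessMC Sᶜ α (fun σ => !G σ) H := by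
  obtain ⟨hG, hlt, hmono, hchange⟩ := h
  refine ⟨fun f => (hG f).mono fun n hn => ?_, hlt, hmono, fun f n hne => hchange f n ?_⟩
  · simpa [Bool.not_eq_true'] using hn.not
  · simpa using hne

lemma GuessableMC.compl {S : Set (ℕ → ℕ)} {α : Ordinal.{0}} (h : GuessableMC S α) :
    GuessableMC Sᶜ α :=
  let ⟨_, H, hw⟩ := h; ⟨_, H, hw.compl⟩

lemma Monotone.mem_iff_sInf_le {X : Type*} {B : Ordinal.{0} → Set X} (hB : Monotone B) {x : X}
    {α : Ordinal.{0}} (hx : x ∈ B α) (η : Ordinal.{0}) : x ∈ B η ↔ sInf {η | x ∈ B η} ≤ η :=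
  ⟨fun h => csInf_le' h, fun h => hB h (csInf_mem (s := {η | x ∈ B η}) ⟨α, hx⟩)⟩

lemma guessableMC_dSet {α : Ordinal.{0}} {B : Ordinal.{0} → Set (ℕ → ℕ)} (hB : Monotone B)
    (hopen : ∀ η, IsOpen (B η)) (huniv : B α = Set.univ) : GuessableMC (DSet α B) (α + 1) := by
  set H : List ℕ → Ordinal.{0} := fun σ => sInf {η | extensions σ ⊆ B η}
  set r : (ℕ → ℕ) → Ordinal.{0} := fun f => sInf {η | f ∈ B η}
  have hα : ∀ {U}, U ⊆ B α := fun {U} => huniv ▸ Set.subset_univ U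
  have hr (f : ℕ → ℕ) : ∀ η, f ∈ B η ↔ r f ≤ η := hB.mem_iff_sInf_le (hα (Set.mem_univ f))
  have hH_eventually (f : ℕ → ℕ) : ∀ᶠ n in atTop, H (res f n) = r f := by
    filter_upwards [(hopen _).eventually_extensions_res_subset ((hr f _).2 le_rfl)] with n hn
    refine le_antisymm (csInf_le' hn) ((hr f _).1 ?_)
    exact csInf_mem (s := {η | extensions (res f n) ⊆ B η}) ⟨α, hα⟩ (mem_extensions_res f n)
  have hH_mono (f : ℕ → ℕ) (n : ℕ) : H (res f (n + 1)) ≤ H (res f n) :=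
    csInf_le_csInf (OrderBot.bddBelow _) ⟨α, hα⟩ fun η hη =>
      (extensions_res_succ_subset f n).trans hη
  refine ⟨fun σ => diffGuess α (H σ), H, fun f => ?_, fun σ => ?_, hH_mono, fun f n hne => ?_⟩
  · filter_upwards [hH_eventually f] with n hn
    rw [hn, mem_dSet_iff_diffGuess (hr f) ((hr f α).1 (hα (Set.mem_univ f)))]
  · exact Order.lt_add_one_iff.2 (csInf_le' hα)
  · exact (hH_mono f n).lt_of_ne fun h => hne (congrArg (diffGuess α) h)

theorem InDiff.guessableMC {S : Set (ℕ → ℕ)} {α : Ordinal.{0}} (h : InDiff α S) :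
    GuessableMC S (α + 1) := by
  obtain ⟨A, hopen, hmono, rfl⟩ := h
  set B : Ordinal.{0} → Set (ℕ → ℕ) := fun η => if η < α then A η else Set.univ with hB
  have hAB : ∀ η < α, A η = B η := fun η hη => (if_pos hη).symm
  rw [dSet_congr hAB]
  refine guessableMC_dSet (fun η η' hle => ?_) (fun η => ?_) (if_neg (lt_irrefl α))
  · by_cases hη' : η' < α
    · rw [← hAB η' hη', ← hAB η (hle.trans_lt hη')]
      exact hmono η η' hle hη'
    · simp [hB, hη']
  · by_cases hη : η < α
    · simpa [hB, hη] using hopen η hη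
    · simp [hB, hη]

lemma exists_le_iff_iInf_le (u : ℕ → Ordinal.{0}) (η : Ordinal.{0}) :
    (∃ n, u n ≤ η) ↔ ⨅ n, u n ≤ η :=
  ⟨fun ⟨n, hn⟩ => (ciInf_le' u n).trans hn,
    fun h => let ⟨n, hn⟩ := ciInf_mem u; ⟨n, hn ▸ h⟩⟩

lemma Antitone.eventually_eq_iInf {u : ℕ → Ordinal.{0}} (hu : Antitone u) :
    ∀ᶠ n in atTop, u n = ⨅ n, u n := by
  obtain ⟨N, hN⟩ := ciInf_mem u
  filter_upwards [eventually_ge_atTop N] with n hn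
  exact le_antisymm (hN ▸ hu hn) (ciInf_le' u n)

section AdjustedRank

variable {S : Set (ℕ → ℕ)} {α β : Ordinal.{0}} {G : List ℕ → Bool} {H : List ℕ → Ordinal.{0}}

/-- Raising the mind-change counter by one where needed makes the guess a function of it. -/
noncomputable def adjustedRank (α : Ordinal.{0}) (G : List ℕ → Bool) (H : List ℕ → Ordinal.{0})
    (σ : List ℕ) : Ordinal.{0} :=
  if G σ = diffGuess α (H σ) then H σ else H σ + 1

lemma guess_eq_diffGuess_adjustedRank (σ : List ℕ) :
    G σ = diffGuess α (adjustedRank α G H σ) := by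
  unfold adjustedRank
  split_ifs with h
  · exact h
  · rw [diffGuess_add_one]
    exact Bool.eq_not.2 h

lemma le_adjustedRank (σ : List ℕ) : H σ ≤ adjustedRank α G H σ := by
  unfold adjustedRank
  split_ifs
  exacts [le_rfl, Order.le_succ _]

lemma adjustedRank_le_add_one (σ : List ℕ) : adjustedRank α G H σ ≤ H σ + 1 := by
  unfold adjustedRank
  split_ifs
  exacts [Order.le_succ _, le_rfl]

lemma WitnessMC.rank_anti (h : WitnessMC S β G H) (f : ℕ → ℕ) :
    Antitone fun n => H (res f n) :=
  antitone_nat_of_succ_le (h.2.2.1 f)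

lemma WitnessMC.guess_eq_of_rank_eq (h : WitnessMC S β G H) (f : ℕ → ℕ) {m n : ℕ} (hmn : m ≤ n)
    (hH : H (res f n) = H (res f m)) : G (res f n) = G (res f m) := by
  induction n, hmn using Nat.le_induction with
  | base => rfl
  | succ n hmn ih =>
    have hn : H (res f n) = H (res f m) :=
      le_antisymm (h.rank_anti f hmn) (hH ▸ h.rank_anti f n.le_succ)
    rw [← ih hn]
    by_contra hne
    exact (h.2.2.2 f n hne).ne (hH.trans hn.symm)

lemma WitnessMC.adjustedRank_le (h : WitnessMC S (α + 1) G H) (hG : G [] = false)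
    (σ : List ℕ) : adjustedRank α G H σ ≤ α := by
  have hle : H σ ≤ α := Order.lt_add_one_iff.1 (h.2.1 σ)
  rcases hle.lt_or_eq with hlt | heq
  · exact (adjustedRank_le_add_one σ).trans (Order.add_one_le_iff.2 hlt)
  obtain ⟨f, hf⟩ := exists_res_eq σ
  have hσ : G σ = G [] := by
    have h0 : res f 0 = [] := List.ofFn_zero
    rw [← hf, ← h0]
    refine h.guess_eq_of_rank_eq f (Nat.zero_le _) (le_antisymm (h.rank_anti f (Nat.zero_le _)) ?_)
    rw [hf, heq]
    exact Order.lt_add_one_iff.1 (h.2.1 _)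
  rw [adjustedRank, if_pos (by rw [hσ, hG, heq, diffGuess_self])]
  exact hle

lemma WitnessMC.adjustedRank_anti (h : WitnessMC S β G H) (f : ℕ → ℕ) :
    Antitone fun n => adjustedRank α G H (res f n) := by
  refine antitone_nat_of_succ_le fun n => ?_
  rcases (h.rank_anti f n.le_succ).lt_or_eq with hlt | heq
  · exact (adjustedRank_le_add_one _).trans ((Order.add_one_le_iff.2 hlt).trans (le_adjustedRank _))
  · have hG : G (res f (n + 1)) = G (res f n) := by
      by_contra hne
      exact (h.2.2.2 f n hne).ne heq
    simp only [adjustedRank, hG, heq, le_rfl]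

theorem WitnessMC.inDiff (h : WitnessMC S (α + 1) G H) (hG : G [] = false) : InDiff α S := by
  set ρ := adjustedRank α G H
  refine ⟨fun η => {f | ∃ n, ρ (res f n) ≤ η}, fun η _ => ?_,
    fun η η' hle _ f ⟨n, hn⟩ => ⟨n, hn.trans hle⟩, ?_⟩
  · simp only [Set.ofPred_exists]
    exact isOpen_iUnion fun n => isOpen_setOf_res_mem {σ | ρ σ ≤ η} n
  · ext f
    obtain ⟨n, hGn, hρn⟩ := ((h.1 f).and (h.adjustedRank_anti f).eventually_eq_iInf).exists
    rw [← hGn, mem_dSet_iff_diffGuess (exists_le_iff_iInf_le _) (hρn ▸ h.adjustedRank_le hG _),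
      ← hρn, ← guess_eq_diffGuess_adjustedRank]

end AdjustedRank

theorem GuessableMC.inDiff_or_inDiff_compl {S : Set (ℕ → ℕ)} {α : Ordinal.{0}}
    (h : GuessableMC S (α + 1)) : InDiff α S ∨ InDiff α Sᶜ := by
  obtain ⟨G, H, hw⟩ := h
  cases hG : G []
  · exact .inl (hw.inDiff hG)
  · exact .inr (hw.compl.inDiff (by simp [hG]))

theorem stmt13_general (S : Set (ℕ → ℕ)) (α : Ordinal.{0}) :
    GuessableMC S (α + 1) ↔ (InDiff α S ∨ InDiff α Sᶜ) := by
  refine ⟨GuessableMC.inDiff_or_inDiff_compl, ?_⟩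
  rintro (h | h)
  · exact h.guessableMC
  · simpa using h.guessableMC.compl

theorem stmt13 (S : Set (ℕ → ℕ)) (α : Ordinal.{0}) (hα : 0 < α) :
    GuessableMC S (α + 1) ↔ (InDiff α S ∨ InDiff α Sᶜ) :=
  stmt13_general S α
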